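/- (Conflict rule 5) Let P ⊆ V be a k-defective clique, lb ≥ 0 an integer, and u, v ∈ V \ P distinct with {u,v} ∉ E. With w(x) = |P| − |N(x) ∩ P| and r(P) = k − |E(complement of G[P])|, if |N(u) ∩ N(v) ∩ (V \ P)| ≤ lb − (|P| + r(P) − w(u) − w(v) + 1), then every k-defective clique Q with P ∪ {u,v} ⊆ Q satisfies |Q| ≤ lb. -/
import Mathlib


open Finset

variable {V : Type*} [Fintype V] [DecidableEq V]

/-- The set of non-edges (missing edges) of the subgraph of `G` induced by `S`,
as a finset of unordered pairs. -/
def nonEdges (G : SimpleGraph V) [DecidableRel G.Adj] (S : Finset V) : Finset (Sym2 V) :=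
  ((S ×ˢ S).filter fun p => p.1 ≠ p.2 ∧ ¬ G.Adj p.1 p.2).image fun p => s(p.1, p.2)

/-- `S` is a `k`-defective clique: the complement of `G[S]` has at most `k` edges. -/
def IsDefClique (G : SimpleGraph V) [DecidableRel G.Adj] (k : ℕ) (S : Finset V) : Prop :=
  (nonEdges G S).card ≤ k

/-- `D` is a `k`-defective set: it is a `k`-defective clique in which every vertex
is non-adjacent to at least one other vertex of `D`. -/
def IsDefSet (G : SimpleGraph V) [DecidableRel G.Adj] (k : ℕ) (D : Finset V) : Prop :=
  (∀ u ∈ D, ∃ v ∈ D, v ≠ u ∧ ¬ G.Adj u v) ∧ IsDefClique G k D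

set_option linter.unusedSectionVars false

lemma mem_nonEdges {G : SimpleGraph V} [DecidableRel G.Adj] {S : Finset V} {a b : V} :
    s(a, b) ∈ nonEdges G S ↔ a ∈ S ∧ b ∈ S ∧ a ≠ b ∧ ¬ G.Adj a b := by
  simp only [nonEdges, mem_image, mem_filter, mem_product, Sym2.eq, Sym2.rel_iff', Prod.mk.injEq,
    Prod.swap_prod_mk]
  constructor
  · rintro ⟨⟨x, y⟩, ⟨⟨hx, hy⟩, hne, hadj⟩, (⟨rfl, rfl⟩ | ⟨rfl, rfl⟩)⟩
    · exact ⟨hx, hy, hne, hadj⟩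
    · exact ⟨hy, hx, hne.symm, fun hc => hadj hc.symm⟩
  · rintro ⟨ha, hb, hne, hadj⟩
    exact ⟨(a, b), ⟨⟨ha, hb⟩, hne, hadj⟩, Or.inl ⟨rfl, rfl⟩⟩

lemma vert_mem_of_mem_nonEdges {G : SimpleGraph V} [DecidableRel G.Adj] {S : Finset V}
    {e : Sym2 V} (he : e ∈ nonEdges G S) : ∀ a ∈ e, a ∈ S := by
  induction e using Sym2.ind with
  | _ x y =>
    rw [mem_nonEdges] at he
    intro a ha
    rcases Sym2.mem_iff.mp ha with rfl | rfl
    exacts [he.1, he.2.1]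

lemma nonEdges_mono {G : SimpleGraph V} [DecidableRel G.Adj] {P Q : Finset V} (h : P ⊆ Q) :
    nonEdges G P ⊆ nonEdges G Q :=
  image_subset_image (filter_subset_filter _ (product_subset_product h h))



/-- Conflict rule 5: for non-adjacent `u, v ∈ V \ P`, if
`|N(u) ∩ N(v) ∩ (V \ P)| ≤ lb - (|P| + r(P) - w(u) - w(v) + 1)`,
then every `k`-defective clique `Q ⊇ P ∪ {u,v}` satisfies `|Q| ≤ lb`. -/
theorem conflict_rule_five (G : SimpleGraph V) [DecidableRel G.Adj] (k : ℕ)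
    (P : Finset V) (hP : IsDefClique G k P) (lb : ℕ) (u v : V) (huv : u ≠ v)
    (hu : u ∉ P) (hv : v ∉ P) (hnadj : ¬ G.Adj u v)
    (w : V → ℕ) (hw : ∀ x, w x = P.card - (G.neighborFinset x ∩ P).card)
    (h : (((G.neighborFinset u ∩ G.neighborFinset v) \ P).card : ℤ)
        ≤ (lb : ℤ) - ((P.card : ℤ) + ((k : ℤ) - ((nonEdges G P).card : ℤ))
            - (w u : ℤ) - (w v : ℤ) + 1)) :
    ∀ Q : Finset V, IsDefClique G k Q → P ⊆ Q → u ∈ Q → v ∈ Q → Q.card ≤ lb := by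
  intro Q hQ hPQ huQ hvQ
  classical
  -- w as card of non-neighbors in P
  have hwcard : ∀ x, (P.filter fun y => ¬ G.Adj x y).card = w x := by
    intro x
    have h1 : G.neighborFinset x ∩ P = P.filter fun y => G.Adj x y := by
      ext y; simp [SimpleGraph.mem_neighborFinset, and_comm]
    have h2 := Finset.card_filter_add_card_filter_not
      (s := P) (p := fun y => G.Adj x y)
    rw [hw x, h1]
    omega
  set S1 := nonEdges G P with hS1
  set S2 := (P.filter fun x => ¬ G.Adj u x).image fun x => s(u, x) with hS2
  set S3 := (P.filter fun x => ¬ G.Adj v x).image fun x => s(v, x) with hS3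
  set S4 : Finset (Sym2 V) := {s(u, v)} with hS4
  set bad := (Q \ P).filter fun x => x ≠ u ∧ x ≠ v ∧ ¬(G.Adj u x ∧ G.Adj v x) with hbad
  set S5 := bad.image fun x => if G.Adj u x then s(v, x) else s(u, x) with hS5
  -- cards
  have hc2 : S2.card = w u := by
    rw [hS2, card_image_of_injective _ fun a b hab => (Sym2.congr_right).mp hab, hwcard]
  have hc3 : S3.card = w v := by
    rw [hS3, card_image_of_injective _ fun a b hab => (Sym2.congr_right).mp hab, hwcard]
  have hc5 : S5.card = bad.card := by
    rw [hS5]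
    apply card_image_of_injOn
    intro x hx y hy hxy
    simp only [hbad, Finset.mem_coe, mem_filter] at hx hy
    obtain ⟨-, hxu, hxv, -⟩ := hx
    obtain ⟨-, hyu, hyv, -⟩ := hy
    dsimp only at hxy
    split_ifs at hxy with h1 h2 h2 <;>
      rcases Sym2.eq_iff.mp hxy with ⟨e1, e2⟩ | ⟨e1, e2⟩ <;> simp_all
  -- subsets
  have hs1 : S1 ⊆ nonEdges G Q := nonEdges_mono hPQ
  have hs2 : S2 ⊆ nonEdges G Q := by
    intro e he
    rw [hS2, mem_image] at he
    obtain ⟨x, hx, rfl⟩ := he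
    rw [mem_filter] at hx
    exact mem_nonEdges.mpr ⟨huQ, hPQ hx.1, fun hc => hu (hc ▸ hx.1), hx.2⟩
  have hs3 : S3 ⊆ nonEdges G Q := by
    intro e he
    rw [hS3, mem_image] at he
    obtain ⟨x, hx, rfl⟩ := he
    rw [mem_filter] at hx
    exact mem_nonEdges.mpr ⟨hvQ, hPQ hx.1, fun hc => hv (hc ▸ hx.1), hx.2⟩
  have hs4 : S4 ⊆ nonEdges G Q := by
    intro e he
    rw [hS4, mem_singleton] at he
    subst he
    exact mem_nonEdges.mpr ⟨huQ, hvQ, huv, hnadj⟩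
  have hs5 : S5 ⊆ nonEdges G Q := by
    intro e he
    rw [hS5, mem_image] at he
    obtain ⟨x, hx, rfl⟩ := he
    simp only [hbad, mem_filter, mem_sdiff] at hx
    obtain ⟨⟨hxQ, -⟩, hxu, hxv, hnc⟩ := hx
    split_ifs with h1
    · exact mem_nonEdges.mpr ⟨hvQ, hxQ, fun hc => hxv hc.symm, fun hc => hnc ⟨h1, hc⟩⟩
    · exact mem_nonEdges.mpr ⟨huQ, hxQ, fun hc => hxu hc.symm, h1⟩
  -- disjointness
  have umem : ∀ x : V, u ∈ s(u, x) := fun x => by simp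
  have vmem : ∀ x : V, v ∈ s(v, x) := fun x => by simp
  have d12 : Disjoint S1 S2 := by
    refine disjoint_left.mpr ?_
    rintro e he1 he2
    obtain ⟨x, hx, rfl⟩ := mem_image.mp he2
    exact hu (vert_mem_of_mem_nonEdges he1 u (umem x))
  have d13 : Disjoint S1 S3 := by
    refine disjoint_left.mpr ?_
    rintro e he1 he2
    obtain ⟨x, hx, rfl⟩ := mem_image.mp he2
    exact hv (vert_mem_of_mem_nonEdges he1 v (vmem x))
  have d14 : Disjoint S1 S4 := by
    refine disjoint_left.mpr ?_
    rintro e he1 he2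
    rw [hS4, mem_singleton] at he2
    subst he2
    exact hu (vert_mem_of_mem_nonEdges he1 u (umem v))
  have d15 : Disjoint S1 S5 := by
    refine disjoint_left.mpr ?_
    rintro e he1 he2
    obtain ⟨x, hx, rfl⟩ := mem_image.mp he2
    split_ifs at he1 with h1
    · exact hv (vert_mem_of_mem_nonEdges (by simpa using he1) v (vmem x))
    · exact hu (vert_mem_of_mem_nonEdges (by simpa using he1) u (umem x))
  have d23 : Disjoint S2 S3 := by
    refine disjoint_left.mpr ?_
    rintro e he1 he2
    obtain ⟨x, hx, rfl⟩ := mem_image.mp he1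
    obtain ⟨y, hy, heq⟩ := mem_image.mp he2
    rw [mem_filter] at hx hy
    rcases Sym2.eq_iff.mp heq with ⟨e1, e2⟩ | ⟨e1, e2⟩
    · exact huv e1.symm
    · exact hu (e2 ▸ hy.1)
  have d24 : Disjoint S2 S4 := by
    refine disjoint_left.mpr ?_
    rintro e he1 he2
    obtain ⟨x, hx, rfl⟩ := mem_image.mp he1
    rw [hS4, mem_singleton] at he2
    rw [mem_filter] at hx
    rcases Sym2.eq_iff.mp he2 with ⟨e1, e2⟩ | ⟨e1, e2⟩
    · exact hv (e2 ▸ hx.1)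
    · exact huv e1
  have d34 : Disjoint S3 S4 := by
    refine disjoint_left.mpr ?_
    rintro e he1 he2
    obtain ⟨x, hx, rfl⟩ := mem_image.mp he1
    rw [hS4, mem_singleton] at he2
    rw [mem_filter] at hx
    rcases Sym2.eq_iff.mp he2 with ⟨e1, e2⟩ | ⟨e1, e2⟩
    · exact huv e1.symm
    · exact hu (e2 ▸ hx.1)
  have d25 : Disjoint S2 S5 := by
    refine disjoint_left.mpr ?_
    rintro e he1 he2
    obtain ⟨x, hx, rfl⟩ := mem_image.mp he1
    obtain ⟨y, hy, heq⟩ := mem_image.mp he2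
    rw [mem_filter] at hx
    simp only [hbad, mem_filter, mem_sdiff] at hy
    obtain ⟨⟨-, hyP⟩, hyu, hyv, -⟩ := hy
    split_ifs at heq with h1
    · rcases Sym2.eq_iff.mp heq.symm with ⟨e1, e2⟩ | ⟨e1, e2⟩
      · exact huv e1
      · exact hyu e1.symm
    · rcases Sym2.eq_iff.mp heq.symm with ⟨e1, e2⟩ | ⟨e1, e2⟩
      · exact hyP (e2 ▸ hx.1)
      · exact hyu e1.symm
  have d35 : Disjoint S3 S5 := by
    refine disjoint_left.mpr ?_
    rintro e he1 he2
    obtain ⟨x, hx, rfl⟩ := mem_image.mp he1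
    obtain ⟨y, hy, heq⟩ := mem_image.mp he2
    rw [mem_filter] at hx
    simp only [hbad, mem_filter, mem_sdiff] at hy
    obtain ⟨⟨-, hyP⟩, hyu, hyv, -⟩ := hy
    split_ifs at heq with h1
    · rcases Sym2.eq_iff.mp heq.symm with ⟨e1, e2⟩ | ⟨e1, e2⟩
      · exact hyP (e2 ▸ hx.1)
      · exact hyv e1.symm
    · rcases Sym2.eq_iff.mp heq.symm with ⟨e1, e2⟩ | ⟨e1, e2⟩
      · exact huv e1.symm
      · exact hu (e2 ▸ hx.1)
  have d45 : Disjoint S4 S5 := by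
    refine disjoint_left.mpr ?_
    rintro e he1 he2
    rw [hS4, mem_singleton] at he1
    subst he1
    obtain ⟨y, hy, heq⟩ := mem_image.mp he2
    simp only [hbad, mem_filter, mem_sdiff] at hy
    obtain ⟨-, hyu, hyv, -⟩ := hy
    split_ifs at heq with h1
    · rcases Sym2.eq_iff.mp heq.symm with ⟨e1, e2⟩ | ⟨e1, e2⟩
      · exact huv e1
      · exact hyu e1.symm
    · rcases Sym2.eq_iff.mp heq.symm with ⟨e1, e2⟩ | ⟨e1, e2⟩
      · exact hyv e2.symm
      · exact hyu e1.symm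
  -- total count of non-edges
  have hsub : S1 ∪ S2 ∪ S3 ∪ S4 ∪ S5 ⊆ nonEdges G Q := by
    intro e he
    simp only [mem_union] at he
    rcases he with ((((he | he) | he) | he) | he)
    exacts [hs1 he, hs2 he, hs3 he, hs4 he, hs5 he]
  have hcardU : (S1 ∪ S2 ∪ S3 ∪ S4 ∪ S5).card
      = S1.card + S2.card + S3.card + S4.card + S5.card := by
    rw [card_union_of_disjoint
        (disjoint_union_left.mpr ⟨disjoint_union_left.mpr
          ⟨disjoint_union_left.mpr ⟨d15, d25⟩, d35⟩, d45⟩),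
      card_union_of_disjoint
        (disjoint_union_left.mpr ⟨disjoint_union_left.mpr ⟨d14, d24⟩, d34⟩),
      card_union_of_disjoint (disjoint_union_left.mpr ⟨d13, d23⟩),
      card_union_of_disjoint d12]
  have hbudget : S1.card + w u + w v + 1 + bad.card ≤ k := by
    have h1 : (S1 ∪ S2 ∪ S3 ∪ S4 ∪ S5).card ≤ (nonEdges G Q).card := card_le_card hsub
    rw [hcardU, hc2, hc3, hc5] at h1
    have h2 : S4.card = 1 := by rw [hS4, card_singleton]
    have h3 : (nonEdges G Q).card ≤ k := hQ
    omega
  -- counting Q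
  have huvQP : ({u, v} : Finset V) ⊆ Q \ P := by
    intro x hx
    rcases mem_insert.mp hx with rfl | hx
    · exact mem_sdiff.mpr ⟨huQ, hu⟩
    · rw [mem_singleton] at hx
      subst hx
      exact mem_sdiff.mpr ⟨hvQ, hv⟩
  have e1 : ((Q \ P) \ ({u, v} : Finset V)).card + 2 = (Q \ P).card := by
    have := card_sdiff_add_card_eq_card huvQP
    rwa [card_pair huv] at this
  have e2 : (Q \ P).card + P.card = Q.card := card_sdiff_add_card_eq_card hPQ
  set rest := (Q \ P) \ ({u, v} : Finset V) with hrest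
  have hbadeq : rest.filter (fun x => ¬(G.Adj u x ∧ G.Adj v x)) = bad := by
    ext x
    simp only [hrest, hbad, mem_filter, mem_sdiff, mem_insert, mem_singleton]
    tauto
  have e3 : (rest.filter fun x => G.Adj u x ∧ G.Adj v x).card + bad.card = rest.card := by
    rw [← hbadeq]
    exact card_filter_add_card_filter_not _
  have e4 : (rest.filter fun x => G.Adj u x ∧ G.Adj v x).card
      ≤ ((G.neighborFinset u ∩ G.neighborFinset v) \ P).card := by
    apply card_le_card
    intro x hx
    simp only [mem_filter, hrest, mem_sdiff, mem_inter,
      SimpleGraph.mem_neighborFinset] at hx ⊢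
    tauto
  omega
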